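/- arXiv:2002.12743 — 2 statements merged into one kernel-verified Lean document; each statement's English description precedes it below -/
import Mathlib

section
/- Let G and H be groups, p : G → H a surjective group homomorphism with kernel K. Suppose that every homogeneous quasimorphism on H is identically zero. Then the restriction map from homogeneous quasimorphisms on G to homogeneous quasimorphisms on K is injective: if φ : G → ℝ is a homogeneous quasimorphism vanishing on K, then φ is identically zero. -/
/-- A quasimorphism on a group: a real-valued function with finite defect. -/
def IsQuasimorphism {G : Type*} [Group G] (f : G → ℝ) : Prop :=
  ∃ C : ℝ, ∀ g h : G, |f (g * h) - f g - f h| ≤ C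

/-- A homogeneous function: `f (g ^ n) = n * f g` for all integers `n`. -/
def IsHomogeneous {G : Type*} [Group G] (f : G → ℝ) : Prop :=
  ∀ (g : G) (n : ℤ), f (g ^ n) = (n : ℝ) * f g

/-!
If `p a = p b`, then `(b ^ n)⁻¹ * a ^ n` lies in the kernel for every `n`, so the quasimorphism
inequality for `b ^ n` and `(b ^ n)⁻¹ * a ^ n` together with homogeneity gives
`n * |φ a - φ b| ≤ D(φ)` for all `n`, whence `φ a = φ b`. Thus `φ` factors through `p` as
`ψ ∘ p`, and `ψ` is again a homogeneous quasimorphism on `H`, hence zero.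
-/

theorem eq_zero_of_forall_abs_nat_mul_le {x C : ℝ} (h : ∀ n : ℕ, |n * x| ≤ C) : x = 0 := by
  by_contra hx
  obtain ⟨n, hn⟩ := exists_nat_gt (C / |x|)
  rw [div_lt_iff₀ (abs_pos.2 hx)] at hn
  have hC := h n
  rw [abs_mul, Nat.abs_cast] at hC
  linarith

section

variable {G H : Type*} [Group G] [Group H]

theorem IsQuasimorphism.eq_of_forall_inv_pow_mul_pow {φ : G → ℝ} (hqm : IsQuasimorphism φ)
    (hhom : IsHomogeneous φ) {a b : G} (hab : ∀ n : ℕ, φ ((b ^ n)⁻¹ * a ^ n) = 0) :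
    φ a = φ b := by
  obtain ⟨C, hC⟩ := hqm
  rw [← sub_eq_zero]
  refine eq_zero_of_forall_abs_nat_mul_le (C := C) fun n => ?_
  have hdefect := hC (b ^ n) ((b ^ n)⁻¹ * a ^ n)
  rw [mul_inv_cancel_left, hab, ← zpow_natCast, ← zpow_natCast, hhom, hhom] at hdefect
  simpa only [Int.cast_natCast, sub_zero, mul_sub] using hdefect

theorem IsQuasimorphism.factorsThrough_of_ker {φ : G → ℝ} (hqm : IsQuasimorphism φ)
    (hhom : IsHomogeneous φ) (p : G →* H) (hker : ∀ g ∈ p.ker, φ g = 0) :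
    φ.FactorsThrough p := fun a b hab =>
  hqm.eq_of_forall_inv_pow_mul_pow hhom fun n => hker _ <| by
    simp [MonoidHom.mem_ker, hab]

theorem IsQuasimorphism.of_comp_surjective {ψ : H → ℝ} {p : G →* H}
    (hp : Function.Surjective p) (hqm : IsQuasimorphism (ψ ∘ p)) : IsQuasimorphism ψ := by
  obtain ⟨C, hC⟩ := hqm
  refine ⟨C, hp.forall₂.2 fun a b => ?_⟩
  simpa [← map_mul] using hC a b

theorem IsHomogeneous.of_comp_surjective {ψ : H → ℝ} {p : G →* H}
    (hp : Function.Surjective p) (hhom : IsHomogeneous (ψ ∘ p)) : IsHomogeneous ψ :=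
  hp.forall.2 fun g n => by simpa [← map_zpow] using hhom g n

end

/-- if every homogeneous quasimorphism on `H` vanishes and
`p : G → H` is surjective with kernel `K`, then a homogeneous quasimorphism on `G`
vanishing on `K` is identically zero (i.e. restriction `Q(G) → Q(K)` is injective). -/
theorem restriction_injective {G H : Type*} [Group G] [Group H] (p : G →* H)
    (hp : Function.Surjective p)
    (hQH : ∀ ψ : H → ℝ, IsQuasimorphism ψ → IsHomogeneous ψ → ∀ h : H, ψ h = 0)
    (φ : G → ℝ) (hqm : IsQuasimorphism φ) (hhom : IsHomogeneous φ)
    (hker : ∀ g : G, g ∈ p.ker → φ g = 0) :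
    ∀ g : G, φ g = 0 := by
  set ψ : H → ℝ := Function.extend p φ 0
  have hφ : ψ ∘ p = φ := funext ((hqm.factorsThrough_of_ker hhom p hker).extend_apply 0)
  have hψ : ∀ h, ψ h = 0 :=
    hQH ψ (.of_comp_surjective hp (hφ ▸ hqm)) (.of_comp_surjective hp (hφ ▸ hhom))
  intro g
  rw [← hφ]
  exact hψ (p g)
end

section
/- Let G be a group, let χ : G × G → ℤ be a bounded 2-cocycle with χ(1,1) = 0, for a nonzero integer n let G_n denote the central extension G × ℤ with multiplication (s,i)·(t,j) = (st, i + j + n·χ(s,t)), and let φ_n : G_n → ℝ be the homogenization of the quasimorphism (t,j) ↦ j. If the image φ_1(G_1) equals the set ℚ of rational numbers, then the image φ_n(G_n) also equals ℚ. -/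
/-!
In `Gₙ` one has `(s, i) ^ k = (s ^ k, k i + n c_k(s))`, where `c_k(s)` is the second coordinate of
`(s, 0) ^ k` in `G₁`; dividing by `k` gives `φₙ(s, i) = i + n φ₁(s, 0)`. So `φₙ(Gₙ) = ℤ + n A` where
`ℤ + A = φ₁(G₁) = ℚ`, and `ℤ + n A = ℚ` because `ℚ` is divisible by `n`.
-/

open Filter Topology

/-- Multiplication of the central extension `G × ℤ` determined by `n` times the
integral 2-cocycle `χ`: `(s,i)·(t,j) = (st, i + j + n·χ(s,t))`. -/
def extMul {G : Type*} [Group G] (n : ℤ) (χ : G → G → ℤ) (x y : G × ℤ) : G × ℤ :=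
  (x.1 * y.1, x.2 + y.2 + n * χ x.1 y.1)

/-- Powers in the central extension `G × ℤ` (with `x ^ 0 = (1, 0)`). -/
def extPow {G : Type*} [Group G] (n : ℤ) (χ : G → G → ℤ) (x : G × ℤ) : ℕ → G × ℤ
  | 0 => (1, 0)
  | k + 1 => extMul n χ (extPow n χ x k) x

section

variable {G : Type*} [Group G] (χ : G → G → ℤ)

theorem extPow_fst (m : ℤ) (x : G × ℤ) (k : ℕ) : (extPow m χ x k).1 = x.1 ^ k := by
  induction k with
  | zero => simp [extPow]
  | succ k ih => simp [extPow, extMul, ih, pow_succ]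

theorem extPow_snd (m : ℤ) (s : G) (i : ℤ) (k : ℕ) :
    (extPow m χ (s, i) k).2 = k * i + m * (extPow 1 χ (s, 0) k).2 := by
  induction k with
  | zero => simp [extPow]
  | succ k ih =>
    simp only [extPow, extMul, ih, extPow_fst]
    push_cast
    ring

theorem tendsto_extPow_snd_div {a : ℝ} (m : ℤ) (s : G) (i : ℤ)
    (h : Tendsto (fun k : ℕ => ((extPow 1 χ (s, 0) k).2 : ℝ) / k) atTop (𝓝 a)) :
    Tendsto (fun k : ℕ => ((extPow m χ (s, i) k).2 : ℝ) / k) atTop (𝓝 (i + m * a)) := by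
  refine (tendsto_const_nhds.add (h.const_mul (m : ℝ))).congr' ?_
  filter_upwards [eventually_ne_atTop 0] with k hk
  rw [extPow_snd χ m s i]
  push_cast
  field_simp

theorem homogenization_extPow_eq {a b : ℝ} (m : ℤ) (s : G) (i : ℤ)
    (h₁ : Tendsto (fun k : ℕ => ((extPow 1 χ (s, 0) k).2 : ℝ) / k) atTop (𝓝 a))
    (hm : Tendsto (fun k : ℕ => ((extPow m χ (s, i) k).2 : ℝ) / k) atTop (𝓝 b)) :
    b = i + m * a :=
  tendsto_nhds_unique hm (tendsto_extPow_snd_div χ m s i h₁)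

end

theorem image_central_extension_rational_general {G : Type*} [Group G] (χ : G → G → ℤ)
    (n : ℤ) (hn : n ≠ 0)
    (φ₁ φₙ : G × ℤ → ℝ)
    (hφ₁ : ∀ x : G × ℤ, Tendsto (fun k : ℕ => ((extPow 1 χ x k).2 : ℝ) / (k : ℝ))
      atTop (𝓝 (φ₁ x)))
    (hφₙ : ∀ x : G × ℤ, Tendsto (fun k : ℕ => ((extPow n χ x k).2 : ℝ) / (k : ℝ))
      atTop (𝓝 (φₙ x)))
    (him : Set.range φ₁ = Set.range ((↑) : ℚ → ℝ)) :
    Set.range φₙ = Set.range ((↑) : ℚ → ℝ) := by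
  have hφₙ_eq (s : G) (i : ℤ) : φₙ (s, i) = i + n * φ₁ (s, 0) :=
    homogenization_extPow_eq χ n s i (hφ₁ _) (hφₙ _)
  have hφ₁_eq (s : G) (i : ℤ) : φ₁ (s, i) = i + φ₁ (s, 0) := by
    simpa using homogenization_extPow_eq χ 1 s i (hφ₁ _) (hφ₁ _)
  ext r
  constructor
  · rintro ⟨⟨s, i⟩, rfl⟩
    obtain ⟨q, hq⟩ : φ₁ (s, 0) ∈ Set.range ((↑) : ℚ → ℝ) := him ▸ Set.mem_range_self _
    exact ⟨i + n * q, by rw [hφₙ_eq, ← hq]; push_cast; ring⟩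
  · rintro ⟨q, rfl⟩
    obtain ⟨⟨s, i⟩, hsi⟩ : ((q / n : ℚ) : ℝ) ∈ Set.range φ₁ := him ▸ ⟨_, rfl⟩
    have hs0 : φ₁ (s, 0) = q / n - i := by
      rw [hφ₁_eq] at hsi
      push_cast at hsi
      linarith
    have hn' : (n : ℝ) ≠ 0 := Int.cast_ne_zero.mpr hn
    refine ⟨(s, n * i), ?_⟩
    rw [hφₙ_eq, hs0]
    push_cast
    field_simp
    ring

/-- if `χ` is a bounded 2-cocycle with `χ(1,1) = 0`, `n ≠ 0`, and
`φ₁`, `φₙ` are the homogenizations of the second-coordinate projections on the central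
extensions `G₁` and `Gₙ`, then `φ₁(G₁) = ℚ` implies `φₙ(Gₙ) = ℚ`. -/
theorem image_central_extension_rational {G : Type*} [Group G] (χ : G → G → ℤ)
    (hcoc : ∀ s t u : G, χ s t + χ (s * t) u = χ t u + χ s (t * u))
    (hbdd : ∃ C : ℤ, ∀ s t : G, |χ s t| ≤ C)
    (hone : χ 1 1 = 0)
    (n : ℤ) (hn : n ≠ 0)
    (φ₁ φₙ : G × ℤ → ℝ)
    (hφ₁ : ∀ x : G × ℤ, Tendsto (fun k : ℕ => ((extPow 1 χ x k).2 : ℝ) / (k : ℝ))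
      atTop (𝓝 (φ₁ x)))
    (hφₙ : ∀ x : G × ℤ, Tendsto (fun k : ℕ => ((extPow n χ x k).2 : ℝ) / (k : ℝ))
      atTop (𝓝 (φₙ x)))
    (him : Set.range φ₁ = Set.range ((↑) : ℚ → ℝ)) :
    Set.range φₙ = Set.range ((↑) : ℚ → ℝ) :=
  image_central_extension_rational_general χ n hn φ₁ φₙ hφ₁ hφₙ him
end
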